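/- Let n ∈ ℕ, ω a modulus of continuity, x ∈ [a,b], p integrable on [a,b]. Then sup over f ∈ W^n H^ω[a,b] of |∫_a^b p(t) f(t) dt − Σ_{k=0}^{n−1} (1/k!)(∫_a^b p(t)(t−x)^k dt) f^{(k)}(x)| equals sup over g ∈ H^ω[a,b] of |∫_a^b r_x^n(t) g(t) dt|. -/

import Mathlib

/-! Integrating by parts `n` times turns the deviation of `f ∈ WⁿH^ω[a,b]` into
`∫ r_x^n f^{(n)}`. Each step rests on `r_x^{k+1}(s) = ∫_s^b r_x^k − [s ≤ x] ∫_a^b r_x^k`, and the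
boundary terms are the Taylor terms because of the moments
`∫ r_x^k (t−x)^j = j!/(j+k)! ∫ p(t)(t−x)^{j+k}`. Conversely, every `g ∈ H^ω[a,b]` is continuous,
so its `n`-fold primitive from `x` lies in `WⁿH^ω[a,b]` and has `n`-th derivative `g`. Hence the
two sets of values coincide. -/

open MeasureTheory intervalIntegral

/-- The kernels `r_x^k`: `r_x^0 = p` and
`r_x^{k+1}(s) = −∫_a^s r_x^k` for `s ≤ x`, `∫_s^b r_x^k` for `s ≥ x`. -/
noncomputable def rk (a b x : ℝ) (p : ℝ → ℝ) : ℕ → ℝ → ℝ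
  | 0 => p
  | k + 1 => fun s =>
      if s ≤ x then -(∫ t in a..s, rk a b x p k t)
      else ∫ t in s..b, rk a b x p k t

open Set
open scoped Nat

theorem integral_integral_mul_eq_integral_mul_integral {f g : ℝ → ℝ} {a b : ℝ}
    (hf : IntervalIntegrable f volume a b) (hg : IntervalIntegrable g volume a b) :
    ∫ s in a..b, (∫ t in s..b, f t) * g s = ∫ s in a..b, f s * ∫ t in a..s, g t := by
  set F : ℝ → ℝ := fun s => ∫ t in b..s, f t
  set G : ℝ → ℝ := fun s => ∫ t in a..s, g t
  have hF : AbsolutelyContinuousOnInterval F a b :=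
    hf.absolutelyContinuousOnInterval_intervalIntegral right_mem_uIcc
  have hG : AbsolutelyContinuousOnInterval G a b :=
    hg.absolutelyContinuousOnInterval_intervalIntegral left_mem_uIcc
  have hdF : ∀ᵐ s, s ∈ uIoc a b → deriv F s = f s := by
    filter_upwards [hf.ae_hasDerivAt_integral] with s hs hsI
    exact (hs (uIoc_subset_uIcc hsI) b right_mem_uIcc).deriv
  have hdG : ∀ᵐ s, s ∈ uIoc a b → deriv G s = g s := by
    filter_upwards [hg.ae_hasDerivAt_integral] with s hs hsI
    exact (hs (uIoc_subset_uIcc hsI) a left_mem_uIcc).deriv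
  have parts := hF.integral_mul_deriv_eq_deriv_mul hG
  simp only [F, G, integral_same, zero_mul, mul_zero, sub_zero, zero_sub] at parts
  calc ∫ s in a..b, (∫ t in s..b, f t) * g s = -∫ s in a..b, F s * deriv G s := by
        rw [← intervalIntegral.integral_neg]
        refine integral_congr_ae ?_
        filter_upwards [hdG] with s hs hsI
        rw [hs hsI, integral_symm b s]; ring
    _ = ∫ s in a..b, f s * ∫ t in a..s, g t := by
        rw [parts, neg_neg]
        refine integral_congr_ae ?_
        filter_upwards [hdF] with s hs hsI
        rw [hs hsI]

section Kernel

variable {a b x : ℝ} {p : ℝ → ℝ}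

theorem rk_succ_eq {k : ℕ} (hk : IntervalIntegrable (rk a b x p k) volume a b) {s : ℝ}
    (hs : s ∈ uIcc a b) :
    rk a b x p (k + 1) s = (∫ t in s..b, rk a b x p k t)
      - {t | t ≤ x}.indicator (fun _ => ∫ t in a..b, rk a b x p k t) s := by
  have hsplit := integral_interval_sub_left hk (hk.mono_set (uIcc_subset_uIcc_left hs))
  by_cases hsx : s ≤ x
  · simp only [rk, if_pos hsx, indicator_of_mem (show s ∈ {t | t ≤ x} from hsx)]
    linarith
  · simp only [rk, if_neg hsx, indicator_of_notMem (show s ∉ {t | t ≤ x} from hsx), sub_zero]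

theorem intervalIntegrable_rk (hp : IntervalIntegrable p volume a b) (k : ℕ) :
    IntervalIntegrable (rk a b x p k) volume a b := by
  induction k with
  | zero => exact hp
  | succ k ih =>
    refine (intervalIntegrable_congr fun s hs => (rk_succ_eq ih (uIoc_subset_uIcc hs)).symm).1 ?_
    have hprim : ContinuousOn (fun s => ∫ t in s..b, rk a b x p k t) (uIcc a b) := by
      simp_rw [integral_symm b]
      exact (continuousOn_primitive_interval' ih right_mem_uIcc).neg
    refine hprim.intervalIntegrable.sub ?_
    rw [intervalIntegrable_iff]
    exact (integrableOn_const (by simp)).indicator measurableSet_Iic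

theorem integral_rk_succ_mul (hp : IntervalIntegrable p volume a b) (hx : x ∈ Icc a b) (k : ℕ)
    {h g : ℝ → ℝ} (hg : IntervalIntegrable g volume a b)
    (hh : ∀ t ∈ Icc a b, h t = h a + ∫ u in a..t, g u) :
    ∫ s in a..b, rk a b x p (k + 1) s * g s
      = (∫ t in a..b, rk a b x p k t * h t) - (∫ t in a..b, rk a b x p k t) * h x := by
  have hab : a ≤ b := hx.1.trans hx.2
  have hr := intervalIntegrable_rk (x := x) hp k
  set r := rk a b x p k
  set c := ∫ t in a..b, r t
  have hG : ContinuousOn (fun s => ∫ u in a..s, g u) (uIcc a b) :=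
    continuousOn_primitive_interval' hg left_mem_uIcc
  have hR : ContinuousOn (fun s => ∫ t in s..b, r t) (uIcc a b) := by
    simp_rw [integral_symm b]
    exact (continuousOn_primitive_interval' hr right_mem_uIcc).neg
  have split : ∫ s in a..b, rk a b x p (k + 1) s * g s
      = (∫ s in a..b, (∫ t in s..b, r t) * g s) - c * ∫ s in a..x, g s := by
    have hind : IntervalIntegrable ({t | t ≤ x}.indicator g) volume a b := by
      rw [intervalIntegrable_iff] at hg ⊢
      exact hg.indicator measurableSet_Iic
    rw [← integral_indicator hx, ← intervalIntegral.integral_const_mul,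
      ← integral_sub (hg.continuousOn_mul hR) (hind.const_mul c)]
    refine integral_congr fun s hs => ?_
    by_cases hsx : s ≤ x <;> simp [rk_succ_eq hr hs, hsx, sub_mul, r, c]
  have parts := integral_integral_mul_eq_integral_mul_integral hr hg
  have hrh : ∫ t in a..b, r t * h t = c * h a + ∫ t in a..b, r t * ∫ u in a..t, g u := by
    rw [← intervalIntegral.integral_mul_const,
      ← integral_add (hr.mul_const _) (hr.mul_continuousOn hG)]
    refine integral_congr fun t ht => ?_
    rw [hh t (by rwa [uIcc_of_le hab] at ht)]; ring
  have hgx : ∫ s in a..x, g s = h x - h a := by rw [hh x hx]; ring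
  rw [split, parts, hrh, hgx]; ring

theorem integral_rk_mul_pow (hp : IntervalIntegrable p volume a b) (hx : x ∈ Icc a b)
    (k j : ℕ) :
    ∫ t in a..b, rk a b x p k t * (t - x) ^ j
      = ((j ! : ℝ) / (j + k)!) * ∫ t in a..b, p t * (t - x) ^ (j + k) := by
  induction k generalizing j with
  | zero => simp [rk, Nat.factorial_ne_zero]
  | succ k ih =>
    have hpow : ∀ t ∈ Icc a b, (t - x) ^ (j + 1) / (j + 1)
        = (a - x) ^ (j + 1) / (j + 1) + ∫ u in a..t, (u - x) ^ j := by
      intro t _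
      rw [integral_comp_sub_right (fun u => u ^ j), integral_pow]
      ring
    have hmon : Continuous fun u : ℝ => (u - x) ^ j := by fun_prop
    rw [integral_rk_succ_mul hp hx k (hmon.intervalIntegrable a b) hpow, sub_self,
      zero_pow (by omega), zero_div, mul_zero, sub_zero]
    simp_rw [← mul_div_assoc, intervalIntegral.integral_div, ih (j + 1),
      show j + 1 + k = j + (k + 1) by omega, Nat.factorial_succ j]
    push_cast
    field_simp

theorem integral_rk (hp : IntervalIntegrable p volume a b) (hx : x ∈ Icc a b) (k : ℕ) :
    ∫ t in a..b, rk a b x p k t = (1 / (k ! : ℝ)) * ∫ t in a..b, p t * (t - x) ^ k := by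
  simpa using integral_rk_mul_pow hp hx k 0

theorem integral_rk_mul_eq_sub_sum (hp : IntervalIntegrable p volume a b) (hx : x ∈ Icc a b)
    {n : ℕ} {fd : ℕ → ℝ → ℝ}
    (hint : ∀ k < n, IntervalIntegrable (fd (k + 1)) volume a b)
    (hftc : ∀ k < n, ∀ y ∈ Icc a b, fd k y = fd k a + ∫ t in a..y, fd (k + 1) t) :
    ∫ t in a..b, rk a b x p n t * fd n t
      = (∫ t in a..b, p t * fd 0 t)
        - ∑ k ∈ Finset.range n, (1 / (k ! : ℝ)) * (∫ t in a..b, p t * (t - x) ^ k) * fd k x := by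
  induction n with
  | zero => simp [rk]
  | succ n ih =>
    rw [integral_rk_succ_mul hp hx n (hint n n.lt_succ_self) (hftc n n.lt_succ_self),
      ih (fun k hk => hint k (by omega)) (fun k hk => hftc k (by omega)),
      integral_rk hp hx n, Finset.sum_range_succ]
    ring

end Kernel

theorem continuousOn_of_abs_sub_le {s : Set ℝ} {g ω : ℝ → ℝ} (hω : ContinuousAt ω 0)
    (hω0 : ω 0 = 0) (hg : ∀ u ∈ s, ∀ v ∈ s, |g u - g v| ≤ ω |u - v|) : ContinuousOn g s := by
  refine Metric.continuousOn_iff.2 fun u hu ε hε => ?_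
  obtain ⟨δ, hδ, hωδ⟩ := Metric.continuousAt_iff.1 hω ε hε
  refine ⟨δ, hδ, fun v hv hvu => ?_⟩
  have hsmall : |ω |v - u| - ω 0| < ε := hωδ (by simpa [Real.dist_eq] using hvu)
  rw [hω0, sub_zero] at hsmall
  exact (hg v hv u hu).trans_lt (le_abs_self _ |>.trans_lt hsmall)

noncomputable def iteratedPrimitive (x : ℝ) (g : ℝ → ℝ) : ℕ → ℝ → ℝ
  | 0 => g
  | j + 1 => fun y => ∫ t in x..y, iteratedPrimitive x g j t

section IteratedPrimitive

variable {a b x : ℝ} {g : ℝ → ℝ}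

theorem continuousOn_iteratedPrimitive (hx : x ∈ Icc a b) (hg : ContinuousOn g (Icc a b)) :
    ∀ j, ContinuousOn (iteratedPrimitive x g j) (Icc a b)
  | 0 => hg
  | j + 1 => by
    have hab : a ≤ b := hx.1.trans hx.2
    have := continuousOn_primitive_interval'
      ((continuousOn_iteratedPrimitive hx hg j).intervalIntegrable_of_Icc (μ := volume) hab)
      (by rwa [uIcc_of_le hab])
    rwa [uIcc_of_le hab] at this

theorem iteratedPrimitive_succ_eq (hx : x ∈ Icc a b) (hg : ContinuousOn g (Icc a b)) (j : ℕ)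
    {y : ℝ} (hy : y ∈ Icc a b) :
    iteratedPrimitive x g (j + 1) y
      = iteratedPrimitive x g (j + 1) a + ∫ t in a..y, iteratedPrimitive x g j t := by
  have ha : a ∈ Icc a b := ⟨le_rfl, hx.1.trans hx.2⟩
  have hcont := continuousOn_iteratedPrimitive hx hg j
  exact (integral_add_adjacent_intervals (hcont.mono (uIcc_subset_Icc hx ha)).intervalIntegrable
    (hcont.mono (uIcc_subset_Icc ha hy)).intervalIntegrable).symm

end IteratedPrimitive

theorem stmt10_general (a b : ℝ) (n : ℕ)
    (ω : ℝ → ℝ) (hωc : Continuous ω)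
    (hω0 : ω 0 = 0)
    (p : ℝ → ℝ) (hp : IntervalIntegrable p volume a b)
    (x : ℝ) (hx : x ∈ Set.Icc a b) :
    sSup {v : ℝ | ∃ f : ℝ → ℝ, ∃ fd : ℕ → ℝ → ℝ, fd 0 = f ∧
        (∀ k < n, IntervalIntegrable (fd (k + 1)) volume a b) ∧
        (∀ k < n, ∀ y ∈ Set.Icc a b, fd k y = fd k a + ∫ t in a..y, fd (k + 1) t) ∧
        (∀ u ∈ Set.Icc a b, ∀ v' ∈ Set.Icc a b, |fd n u - fd n v'| ≤ ω |u - v'|) ∧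
        v = |(∫ t in a..b, p t * f t)
              - ∑ k ∈ Finset.range n,
                  (1 / (Nat.factorial k : ℝ)) * (∫ t in a..b, p t * (t - x) ^ k) * fd k x|}
      = sSup {v : ℝ | ∃ g : ℝ → ℝ,
          (∀ u ∈ Set.Icc a b, ∀ v' ∈ Set.Icc a b, |g u - g v'| ≤ ω |u - v'|) ∧
          v = |∫ t in a..b, rk a b x p n t * g t|} := by
  congr 1
  ext v
  constructor
  · rintro ⟨_, fd, rfl, hint, hftc, hmod, rfl⟩
    exact ⟨fd n, hmod, by rw [integral_rk_mul_eq_sub_sum hp hx hint hftc]⟩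
  · rintro ⟨g, hmod, rfl⟩
    have hg := continuousOn_of_abs_sub_le hωc.continuousAt hω0 hmod
    set fd : ℕ → ℝ → ℝ := fun k => iteratedPrimitive x g (n - k)
    have hfdn : fd n = g := by simp [fd, iteratedPrimitive]
    have hint : ∀ k < n, IntervalIntegrable (fd (k + 1)) volume a b := fun k _ =>
      (continuousOn_iteratedPrimitive hx hg _).intervalIntegrable_of_Icc (hx.1.trans hx.2)
    have hftc : ∀ k < n, ∀ y ∈ Icc a b, fd k y = fd k a + ∫ t in a..y, fd (k + 1) t := by
      intro k hk y hy
      simpa only [fd, show n - k = n - (k + 1) + 1 by omega]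
        using iteratedPrimitive_succ_eq hx hg (n - (k + 1)) hy
    refine ⟨fd 0, fd, rfl, hint, hftc, hfdn ▸ hmod, ?_⟩
    rw [← integral_rk_mul_eq_sub_sum hp hx hint hftc, hfdn]

/-- For a modulus of continuity `ω`, the supremum over `f ∈ WⁿH^ω[a,b]` of the
Ostrowski deviation `|∫ p f − Σ_{k<n} (1/k!)(∫ p(t)(t−x)^k dt) f^{(k)}(x)|` equals the
supremum over `g ∈ H^ω[a,b]` of `|∫_a^b r_x^n g|`. -/
theorem stmt10 (a b : ℝ) (hab : a < b) (n : ℕ) (hn : 1 ≤ n)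
    (ω : ℝ → ℝ) (hωc : Continuous ω) (hωm : MonotoneOn ω (Set.Ici 0))
    (hω0 : ω 0 = 0)
    (hωsub : ∀ s t : ℝ, 0 ≤ s → 0 ≤ t → ω (s + t) ≤ ω s + ω t)
    (p : ℝ → ℝ) (hp : IntervalIntegrable p volume a b)
    (x : ℝ) (hx : x ∈ Set.Icc a b) :
    sSup {v : ℝ | ∃ f : ℝ → ℝ, ∃ fd : ℕ → ℝ → ℝ, fd 0 = f ∧
        (∀ k < n, IntervalIntegrable (fd (k + 1)) volume a b) ∧
        (∀ k < n, ∀ y ∈ Set.Icc a b, fd k y = fd k a + ∫ t in a..y, fd (k + 1) t) ∧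
        (∀ u ∈ Set.Icc a b, ∀ v' ∈ Set.Icc a b, |fd n u - fd n v'| ≤ ω |u - v'|) ∧
        v = |(∫ t in a..b, p t * f t)
              - ∑ k ∈ Finset.range n,
                  (1 / (Nat.factorial k : ℝ)) * (∫ t in a..b, p t * (t - x) ^ k) * fd k x|}
      = sSup {v : ℝ | ∃ g : ℝ → ℝ,
          (∀ u ∈ Set.Icc a b, ∀ v' ∈ Set.Icc a b, |g u - g v'| ≤ ω |u - v'|) ∧
          v = |∫ t in a..b, rk a b x p n t * g t|} :=
  stmt10_general a b n ω hωc hω0 p hp x hx
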